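/- For all nonzero complex numbers z, q, α, the identity (1 − z/(αq)) · (q⁴/z − q³α³ − z q²α² − z² q α) = z³ + q⁴/z − (q³α³ + q³/α) holds. (This is the matrix factorization of the Hori–Vafa potential of the teardrop orbifold corresponding to the balanced torus fiber with non-unitary holonomy α satisfying 3α⁴ = 1.) -/

import Mathlib

/-!
The factor `1 - z/(αq)` vanishes at `z₀ = αq` and `q³α³ + q³/α = W(αq)`, so the identity is
the division of `W(z) - W(z₀)` by `z - z₀`: the difference quotients of `z³` and of `q⁴/z` are
`z² + zz₀ + z₀²` and `-q⁴/(zz₀)`.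
-/

noncomputable def teardropPotential (q z : ℂ) : ℂ := z ^ 3 + q ^ 4 / z

theorem teardropPotential_sub_eq_mul (q : ℂ) {z z₀ : ℂ} (hz : z ≠ 0) (hz₀ : z₀ ≠ 0) :
    teardropPotential q z - teardropPotential q z₀ =
      (1 - z / z₀) * (q ^ 4 / z - z₀ ^ 3 - z * z₀ ^ 2 - z ^ 2 * z₀) := by
  unfold teardropPotential
  field_simp
  ring

theorem teardropPotential_at_mul (q α : ℂ) :
    teardropPotential q (α * q) = q ^ 3 * α ^ 3 + q ^ 3 / α := by
  rcases eq_or_ne q 0 with rfl | hq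
  · simp [teardropPotential]
  · rw [teardropPotential, mul_pow, pow_succ q 3, mul_comm α q, ← div_div,
      mul_div_cancel_right₀ _ hq]
    ring

/-- Matrix factorization of the Hori–Vafa potential `W(z) = z³ + q⁴/z` of the
teardrop orbifold corresponding to the balanced torus fiber with (non-unitary)
holonomy `α`:
`(1 − z/(αq)) (q⁴/z − q³α³ − zq²α² − z²qα) = z³ + q⁴/z − (q³α³ + q³/α)`. -/
theorem teardrop_matrix_factorization (z q α : ℂ)
    (hz : z ≠ 0) (hq : q ≠ 0) (hα : α ≠ 0) :
    (1 - z / (α * q)) * (q ^ 4 / z - q ^ 3 * α ^ 3 - z * q ^ 2 * α ^ 2 - z ^ 2 * q * α)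
      = z ^ 3 + q ^ 4 / z - (q ^ 3 * α ^ 3 + q ^ 3 / α) := by
  have h := teardropPotential_sub_eq_mul q hz (mul_ne_zero hα hq)
  rw [teardropPotential_at_mul, teardropPotential] at h
  rw [h]
  ring
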